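/- Let c ∈ (0,1), λ > 0, and β0, β1 real with β0·β1 > λ and √λ·|β0−β1| ≤ (β0β1 − λ)·tanh(√λ·(1−c)). Then a* ∈ [0, 1−c], g(a, β0, β1, λ) > 0 for every a ∈ [0, a*), and g(a, β0, β1, λ) < 0 for every a ∈ (a*, 1−c]. -/

import Mathlib

/-- The function `g` governing the sign of `∂ₐ f`. -/
noncomputable def g (c a β0 β1 lam : ℝ) : ℝ :=
  (lam - β0 * β1) * Real.tanh (2 * Real.sqrt lam * (a - (1 - c) / 2))
    + Real.sqrt lam * (β0 - β1)

/-- The real inverse hyperbolic tangent, `artanh x = (1/2) ln((1+x)/(1-x))`,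
the inverse of `tanh` on `(-1, 1)`. -/
noncomputable def artanh (x : ℝ) : ℝ := (1 / 2) * Real.log ((1 + x) / (1 - x))

/-- The critical point `a*`, the unique zero of `g`. -/
noncomputable def aStar (c β0 β1 lam : ℝ) : ℝ :=
  (1 / (2 * Real.sqrt lam)) * artanh (Real.sqrt lam * (β1 - β0) / (lam - β0 * β1))
    + (1 - c) / 2

lemma tanh_eq_exp (x : ℝ) :
    Real.tanh x = (Real.exp (2*x) - 1) / (Real.exp (2*x) + 1) := by
  rw [Real.tanh_eq_sinh_div_cosh, Real.sinh_eq, Real.cosh_eq]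
  have h2 : Real.exp (2*x) = Real.exp x * Real.exp x := by
    rw [two_mul, Real.exp_add]
  rw [h2, Real.exp_neg]
  have hx := (Real.exp_pos x).ne'
  have hp : Real.exp x * Real.exp x + 1 > 0 := by positivity
  field_simp

lemma tanh_strictMono : StrictMono Real.tanh := by
  intro x y hxy
  rw [tanh_eq_exp, tanh_eq_exp]
  have hx := Real.exp_pos (2*x)
  have hy := Real.exp_pos (2*y)
  have h : Real.exp (2*x) < Real.exp (2*y) := Real.exp_lt_exp.mpr (by linarith)
  rw [div_lt_div_iff₀ (by linarith) (by linarith)]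
  nlinarith

lemma tanh_lt_one' (x : ℝ) : Real.tanh x < 1 := by
  rw [tanh_eq_exp]
  have hx := Real.exp_pos (2*x)
  rw [div_lt_one (by linarith)]
  linarith

lemma tanh_artanh {x : ℝ} (h1 : -1 < x) (h2 : x < 1) : Real.tanh (artanh x) = x := by
  have hp1 : (0:ℝ) < 1 + x := by linarith
  have hp2 : (0:ℝ) < 1 - x := by linarith
  have he : 2 * artanh x = Real.log ((1 + x) / (1 - x)) := by unfold artanh; ring
  rw [tanh_eq_exp, he, Real.exp_log (div_pos hp1 hp2)]
  field_simp
  ring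

theorem stmt17 (c lam β0 β1 : ℝ) (hc : c ∈ Set.Ioo (0:ℝ) 1) (hlam : 0 < lam)
    (hgt : lam < β0 * β1)
    (hle : Real.sqrt lam * |β0 - β1| ≤ (β0 * β1 - lam) * Real.tanh (Real.sqrt lam * (1 - c))) :
    aStar c β0 β1 lam ∈ Set.Icc (0:ℝ) (1 - c) ∧
    (∀ a ∈ Set.Ico (0:ℝ) (aStar c β0 β1 lam), 0 < g c a β0 β1 lam) ∧
    (∀ a ∈ Set.Ioc (aStar c β0 β1 lam) (1 - c), g c a β0 β1 lam < 0) := by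
  obtain ⟨hc0, hc1⟩ := hc
  set s := Real.sqrt lam with hs_def
  have hs : 0 < s := Real.sqrt_pos.mpr hlam
  have hK : 0 < β0 * β1 - lam := by linarith
  set x : ℝ := s * (β0 - β1) / (β0 * β1 - lam) with hx_def
  have harg : s * (β1 - β0) / (lam - β0 * β1) = x := by
    rw [hx_def]
    rw [div_eq_div_iff (by linarith) (by linarith)]
    ring
  -- |x| ≤ tanh (s (1-c))
  have hxle : |x| ≤ Real.tanh (s * (1 - c)) := by
    rw [hx_def, abs_div, abs_of_pos hK, abs_mul, abs_of_pos hs,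
      div_le_iff₀ hK]
    linarith [hle]
  have htpos : 0 < Real.tanh (s * (1 - c)) := by
    have h0 : Real.tanh 0 = 0 := by simp [Real.tanh_eq_sinh_div_cosh]
    have := tanh_strictMono (show (0:ℝ) < s * (1 - c) by nlinarith)
    linarith [this, h0.symm ▸ this]
  have hx1 : |x| < 1 := lt_of_le_of_lt hxle (tanh_lt_one' _)
  have hx1' : -1 < x := by cases abs_lt.mp hx1; linarith
  have hx1'' : x < 1 := by cases abs_lt.mp hx1; linarith
  have hTA : Real.tanh (artanh x) = x := tanh_artanh hx1' hx1''
  -- aStar formula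
  have haS : aStar c β0 β1 lam = (1 / (2 * s)) * artanh x + (1 - c) / 2 := by
    rw [aStar, harg]
  have hA : 2 * s * (aStar c β0 β1 lam - (1 - c) / 2) = artanh x := by
    rw [haS]
    field_simp
    ring
  -- artanh bounds
  have hub : artanh x ≤ s * (1 - c) := by
    have : Real.tanh (artanh x) ≤ Real.tanh (s * (1 - c)) := by
      rw [hTA]; exact le_trans (le_abs_self x) hxle
    exact tanh_strictMono.le_iff_le.mp this
  have hlb : -(s * (1 - c)) ≤ artanh x := by
    have : Real.tanh (-(s * (1 - c))) ≤ Real.tanh (artanh x) := by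
      rw [hTA, Real.tanh_neg]
      have := neg_abs_le x
      linarith [neg_le_neg hxle]
    exact tanh_strictMono.le_iff_le.mp this
  have hmem : aStar c β0 β1 lam ∈ Set.Icc (0:ℝ) (1 - c) := by
    constructor
    · rw [haS]
      have h1 : (1 / (2 * s)) * (-(s * (1 - c))) ≤ (1 / (2 * s)) * artanh x :=
        mul_le_mul_of_nonneg_left hlb (by positivity)
      have h2 : (1 / (2 * s)) * (-(s * (1 - c))) = -((1 - c) / 2) := by
        field_simp
      linarith
    · rw [haS]
      have h1 : (1 / (2 * s)) * artanh x ≤ (1 / (2 * s)) * (s * (1 - c)) :=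
        mul_le_mul_of_nonneg_left hub (by positivity)
      have h2 : (1 / (2 * s)) * (s * (1 - c)) = (1 - c) / 2 := by
        field_simp
      linarith
  have hsx : s * (β0 - β1) = x * (β0 * β1 - lam) := by
    rw [hx_def]; field_simp
  refine ⟨hmem, ?_, ?_⟩
  · intro a ha
    obtain ⟨ha0, haS'⟩ := ha
    have hlt : 2 * s * (a - (1 - c) / 2) < artanh x := by
      rw [← hA]
      have : a < aStar c β0 β1 lam := haS'
      nlinarith
    have ht : Real.tanh (2 * s * (a - (1 - c) / 2)) < x := hTA ▸ tanh_strictMono hlt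
    rw [g]
    nlinarith [mul_pos hK (show 0 < x - Real.tanh (2 * s * (a - (1 - c) / 2)) by linarith)]
  · intro a ha
    obtain ⟨haS', ha1⟩ := ha
    have hlt : artanh x < 2 * s * (a - (1 - c) / 2) := by
      rw [← hA]
      nlinarith
    have ht : x < Real.tanh (2 * s * (a - (1 - c) / 2)) := hTA ▸ tanh_strictMono hlt
    rw [g]
    nlinarith [mul_pos hK (show 0 < Real.tanh (2 * s * (a - (1 - c) / 2)) - x by linarith)]
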